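/- Suppose S=(s_i) is an orientable sequence of order n and period m with w(S) even. Then D^{-1}(S) consists of an o-disjoint pair of primitive complementary orientable sequences of order n+1, each of period m. -/
import Mathlib


/-- A sequence has `m` as a (not necessarily least) period. -/
def hasPer (s : ℕ → Bool) (m : ℕ) : Prop := ∀ i, s (i + m) = s i

/-- `m` is the (least positive) period of `s`. -/
def isPeriod (s : ℕ → Bool) (m : ℕ) : Prop :=
  0 < m ∧ hasPer s m ∧ ∀ k, 0 < k → hasPer s k → m ≤ k

/-- The `n`-tuple appearing at position `i` of `s`. -/
def tup (s : ℕ → Bool) (n i : ℕ) : Fin n → Bool := fun k => s (i + (k : ℕ))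

/-- The reverse of an `n`-tuple. -/
def tupRev {n : ℕ} (u : Fin n → Bool) : Fin n → Bool := fun k => u k.rev

/-- An `n`-window sequence of period `m`. -/
def isNWindow (s : ℕ → Bool) (n m : ℕ) : Prop :=
  isPeriod s m ∧ ∀ i j, tup s n i = tup s n j → i ≡ j [MOD m]

/-- The weight of (one period of) `s`. -/
def wt (s : ℕ → Bool) (m : ℕ) : ℕ := ∑ i ∈ Finset.range m, (if s i then 1 else 0)

/-- The complement of a sequence. -/
def seqCompl (s : ℕ → Bool) : ℕ → Bool := fun i => !(s i)

/-- Two sequences are disjoint if they share no `n`-tuple. -/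
def disjointSeq (s t : ℕ → Bool) (n : ℕ) : Prop := ∀ i j, tup s n i ≠ tup t n j

/-- A sequence is primitive if it is disjoint from its complement. -/
def primitiveSeq (s : ℕ → Bool) (n : ℕ) : Prop := disjointSeq s (seqCompl s) n

/-- An orientable sequence of order `n` and period `m`. -/
def isOrientable (s : ℕ → Bool) (n m : ℕ) : Prop :=
  isNWindow s n m ∧ ∀ i j, tup s n i ≠ tupRev (tup s n j)

/-- Two sequences are o-disjoint: disjoint, and no `n`-tuple of one is the
reverse of an `n`-tuple of the other. -/
def oDisjoint (s t : ℕ → Bool) (n : ℕ) : Prop :=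
  disjointSeq s t n ∧ ∀ i j, tup s n i ≠ tupRev (tup t n j)

/-- The Lempel homomorphism `D` on periodic sequences. -/
def Dmap (t : ℕ → Bool) : ℕ → Bool := fun i => xor (t i) (t (i + 1))

/-- The set `D⁻¹(s)` of sequences mapping to `s` under `D`. -/
def Dinv (s : ℕ → Bool) : Set (ℕ → Bool) := { t | Dmap t = s }
/-- Partial xor-sum of `s`: parity of the weight up to `i`. -/
def pxor (s : ℕ → Bool) : ℕ → Bool := fun i => decide (wt s i % 2 = 1)

lemma pxor_zero (s : ℕ → Bool) : pxor s 0 = false := by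
  simp [pxor, wt]

lemma pxor_succ (s : ℕ → Bool) (i : ℕ) : pxor s (i + 1) = xor (pxor s i) (s i) := by
  have hwt : wt s (i + 1) = wt s i + (if s i then 1 else 0) :=
    Finset.sum_range_succ _ i
  rcases Nat.mod_two_eq_zero_or_one (wt s i) with hm | hm <;>
    cases hs : s i <;>
      simp [pxor, hwt, hs, Nat.add_mod, hm]

lemma Dmap_pxor (s : ℕ → Bool) : Dmap (pxor s) = s := by
  funext i
  simp only [Dmap, pxor_succ]
  cases pxor s i <;> cases s i <;> rfl

lemma Dmap_seqCompl (t : ℕ → Bool) : Dmap (seqCompl t) = Dmap t := by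
  funext i
  simp only [Dmap, seqCompl]
  cases t i <;> cases t (i + 1) <;> rfl

lemma pxor_hasPer (s : ℕ → Bool) (m : ℕ) (hs : hasPer s m) (hw : Even (wt s m)) :
    hasPer (pxor s) m := by
  intro i
  induction i with
  | zero =>
    have h0 : wt s m % 2 = 0 := Nat.even_iff.mp hw
    show pxor s (0 + m) = pxor s 0
    rw [Nat.zero_add, pxor_zero]
    simp [pxor, h0]
  | succ i ih =>
    have : i + 1 + m = (i + m) + 1 := by omega
    rw [this, pxor_succ, pxor_succ, ih, hs i]

lemma hasPer_mul (t : ℕ → Bool) (m : ℕ) (ht : hasPer t m) :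
    ∀ q i, t (i + m * q) = t i := by
  intro q
  induction q with
  | zero => simp
  | succ q ih =>
    intro i
    have : i + m * (q + 1) = (i + m) + m * q := by ring
    rw [this, ih, ht]

lemma eq_of_per_modEq {t : ℕ → Bool} {m : ℕ} (ht : hasPer t m) (_hm : 0 < m)
    {i j : ℕ} (hij : i ≡ j [MOD m]) : t i = t j := by
  have hi : t i = t (i % m) := by
    conv_lhs => rw [← Nat.mod_add_div i m]
    exact hasPer_mul t m ht _ _
  have hj : t j = t (j % m) := by
    conv_lhs => rw [← Nat.mod_add_div j m]
    exact hasPer_mul t m ht _ _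
  rw [hi, hj, hij]

lemma tup_eq_of_per_modEq {t : ℕ → Bool} {m : ℕ} (ht : hasPer t m) (hm : 0 < m)
    {i j : ℕ} (hij : i ≡ j [MOD m]) (n : ℕ) : tup t n i = tup t n j := by
  funext k
  exact eq_of_per_modEq ht hm (hij.add_right (k : ℕ))

/-- Differencing: equal `(n+1)`-tuples give equal `n`-tuples of the `D`-images. -/
lemma diff_tup {t u : ℕ → Bool} {n i j : ℕ}
    (h : tup t (n + 1) i = tup u (n + 1) j) :
    tup (Dmap t) n i = tup (Dmap u) n j := by
  funext k
  have h1 := congrFun h ⟨(k : ℕ), by omega⟩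
  have h2 := congrFun h ⟨(k : ℕ) + 1, by omega⟩
  simp only [tup] at h1 h2 ⊢
  simp only [Dmap]
  rw [h1, show i + (k : ℕ) + 1 = i + ((k : ℕ) + 1) by omega, h2,
    show j + ((k : ℕ) + 1) = j + (k : ℕ) + 1 by omega]

lemma diff_tup_rev {t u : ℕ → Bool} {n i j : ℕ}
    (h : tup t (n + 1) i = tupRev (tup u (n + 1) j)) :
    tup (Dmap t) n i = tupRev (tup (Dmap u) n j) := by
  funext k
  have hk : (k : ℕ) < n := k.2
  have h1 := congrFun h ⟨(k : ℕ), by omega⟩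
  have h2 := congrFun h ⟨(k : ℕ) + 1, by omega⟩
  simp only [tup, tupRev, Fin.val_rev] at h1 h2 ⊢
  rw [show n + 1 - ((k : ℕ) + 1) = n - (k : ℕ) by omega] at h1
  rw [show n + 1 - ((k : ℕ) + 1 + 1) = n - (k : ℕ) - 1 by omega] at h2
  simp only [Dmap]
  rw [h1, show i + (k : ℕ) + 1 = i + ((k : ℕ) + 1) by omega, h2,
    show n - ((k : ℕ) + 1) = n - (k : ℕ) - 1 by omega,
    show j + (n - (k : ℕ) - 1) + 1 = j + (n - (k : ℕ)) by omega]
  exact Bool.xor_comm _ _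

/-- Theorem 4, even case: if `S` is an orientable sequence of order `n` and
period `m` with even weight, then `D⁻¹(S)` consists of an o-disjoint pair of
primitive complementary orientable sequences of order `n+1` and period `m`. -/
theorem lempel_orientable_even (n m : ℕ) (s : ℕ → Bool)
    (h : isOrientable s n m) (hw : Even (wt s m)) :
    ∃ t t' : ℕ → Bool, t ≠ t' ∧ Dinv s = {t, t'} ∧ t' = seqCompl t ∧
      oDisjoint t t' (n + 1) ∧ primitiveSeq t (n + 1) ∧ primitiveSeq t' (n + 1) ∧
      isOrientable t (n + 1) m ∧ isOrientable t' (n + 1) m := by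
  obtain ⟨⟨⟨hm, hsper, hsleast⟩, hwin⟩, hrev⟩ := h
  set t : ℕ → Bool := pxor s with ht
  have hDt : Dmap t = s := Dmap_pxor s
  have hDt' : Dmap (seqCompl t) = s := by rw [Dmap_seqCompl, hDt]
  have htper : hasPer t m := pxor_hasPer s m hsper hw
  have ht'per : hasPer (seqCompl t) m := fun i => by
    simp only [seqCompl, htper i]
  -- least period
  have hleast : ∀ (u : ℕ → Bool), Dmap u = s → ∀ k, 0 < k → hasPer u k → m ≤ k := by
    intro u hu k hk hup
    refine hsleast k hk ?_
    intro i
    rw [← hu]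
    simp only [Dmap, hup i]
    have : i + k + 1 = (i + 1) + k := by omega
    rw [this, hup]
  -- window property lifts
  have hwin' : ∀ (u v : ℕ → Bool), Dmap u = s → Dmap v = s →
      ∀ i j, tup u (n + 1) i = tup v (n + 1) j → i ≡ j [MOD m] := by
    intro u v hu hv i j hij
    have := diff_tup hij
    rw [hu, hv] at this
    exact hwin i j this
  -- no reversed tuples between any two preimages
  have hrev' : ∀ (u v : ℕ → Bool), Dmap u = s → Dmap v = s →
      ∀ i j, tup u (n + 1) i ≠ tupRev (tup v (n + 1) j) := by
    intro u v hu hv i j hij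
    have := diff_tup_rev hij
    rw [hu, hv] at this
    exact hrev i j this
  -- primitivity
  have hprim : primitiveSeq t (n + 1) := by
    intro i j hij
    have hmod := hwin' t (seqCompl t) hDt hDt' i j hij
    have := tup_eq_of_per_modEq htper hm hmod (n + 1)
    rw [this] at hij
    have := congrFun hij ⟨0, by omega⟩
    simp only [tup, seqCompl, Nat.add_zero] at this
    cases t j <;> simp_all
  have hcc : seqCompl (seqCompl t) = t := by
    funext a; simp [seqCompl]
  have hprim' : primitiveSeq (seqCompl t) (n + 1) := by
    intro i j hij
    rw [hcc] at hij
    exact hprim j i hij.symm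
  refine ⟨t, seqCompl t, ?_, ?_, rfl, ⟨hprim, hrev' t (seqCompl t) hDt hDt'⟩,
    hprim, hprim', ⟨⟨⟨hm, htper, hleast t hDt⟩, hwin' t t hDt hDt⟩, hrev' t t hDt hDt⟩,
    ⟨⟨⟨hm, ht'per, hleast _ hDt'⟩, hwin' _ _ hDt' hDt'⟩, hrev' _ _ hDt' hDt'⟩⟩
  · intro heq
    have := congrFun heq 0
    simp only [seqCompl] at this
    exact absurd this (by cases t 0 <;> simp)
  · ext u
    simp only [Dinv, Set.mem_setOf_eq, Set.mem_insert_iff, Set.mem_singleton_iff]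
    constructor
    · intro hu
      have key : ∀ i, u i = xor (u 0) (t i) := by
        intro i
        induction i with
        | zero => rw [ht, pxor_zero]; cases u 0 <;> rfl
        | succ i ih =>
          have hs : xor (u i) (u (i + 1)) = s i := congrFun hu i
          have : u (i + 1) = xor (u i) (s i) := by
            cases hu0 : u i <;> cases hu1 : u (i + 1) <;> simp_all
          rw [this, ih, ht, pxor_succ, ← ht]
          cases u 0 <;> cases t i <;> cases s i <;> rfl
      cases hu0 : u 0 with
      | false =>
        left; funext i; rw [key i, hu0]; cases t i <;> rfl
      | true =>
        right; funext i; rw [key i, hu0]; simp [seqCompl]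
    · rintro (rfl | rfl)
      · exact hDt
      · exact hDt'
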